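/- Fix ℛ ≥ 0, δ ∈ [0,1], κ ∈ [0,1], β ≥ 0, 𝕀 ∈ {0,1}. Let f and 𝐟 be the GLWB cash-flow and state-transition functions on [0,∞)² × [0,2]. Then for all x, x' ∈ [0,∞)² with x ≤ x' componentwise and any λ ∈ {0,1,2}, there exists λ' ∈ [0,2] such that f(x,λ) ≤ f(x',λ') and 𝐟(x,λ) ≤ 𝐟(x',λ') componentwise. -/
import Mathlib


/-- GLWB cash-flow function. -/
noncomputable def glwbCashFlow (R δ κ : ℝ) (x : ℝ × ℝ) (lam : ℝ) : ℝ :=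
  if lam = 0 then R * 0
  else if lam ≤ 1 then R * (lam * δ * x.2)
  else R * (δ * x.2 + (lam - 1) * (1 - κ) * max (x.1 - δ * x.2) 0)

/-- GLWB state-transition function. -/
noncomputable def glwbState (β δ I : ℝ) (x : ℝ × ℝ) (lam : ℝ) : ℝ × ℝ :=
  if lam = 0 then (x.1, max (x.2 * (1 + β)) (I * x.1))
  else if lam ≤ 1 then
    (max (x.1 - lam * δ * x.2) 0, max x.2 (I * (x.1 - lam * δ * x.2)))
  else
    (2 - lam) • (max (x.1 - δ * x.2) 0, max x.2 (I * (x.1 - δ * x.2)))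

theorem glwb_monotonicity_condition
    (R δ κ β I : ℝ) (hR : 0 ≤ R) (hδ : δ ∈ Set.Icc (0:ℝ) 1)
    (hκ : κ ∈ Set.Icc (0:ℝ) 1) (hβ : 0 ≤ β) (hI : I = 0 ∨ I = 1) :
    ∀ x x' : ℝ × ℝ, 0 ≤ x.1 → 0 ≤ x.2 → 0 ≤ x'.1 → 0 ≤ x'.2 →
      x ≤ x' → ∀ lam ∈ ({0, 1, 2} : Set ℝ),
      ∃ lam' ∈ Set.Icc (0:ℝ) 2,
        glwbCashFlow R δ κ x lam ≤ glwbCashFlow R δ κ x' lam' ∧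
        glwbState β δ I x lam ≤ glwbState β δ I x' lam' := by
  obtain ⟨hδ0, hδ1⟩ := hδ
  obtain ⟨hκ0, hκ1⟩ := hκ
  have hI0 : (0:ℝ) ≤ I := by rcases hI with h | h <;> simp [h]
  intro x x' hx1 hx2 hx1' hx2' hle lam hlam
  rw [Prod.le_def] at hle
  obtain ⟨h1, h2⟩ := hle
  simp only [Set.mem_insert_iff, Set.mem_singleton_iff] at hlam
  rcases hlam with rfl | rfl | rfl
  · -- lam = 0
    refine ⟨0, by constructor <;> norm_num, ?_, ?_⟩
    · simp [glwbCashFlow]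
    · simp only [glwbState, if_pos rfl]
      rw [Prod.le_def]
      constructor
      · exact h1
      · exact max_le_max (by nlinarith) (by nlinarith)
  · -- lam = 1
    rcases eq_or_lt_of_le hx2 with h20 | h2pos
    · -- x.2 = 0 : take lam' = 0
      refine ⟨0, by constructor <;> norm_num, ?_, ?_⟩
      · simp [glwbCashFlow, ← h20]
      · simp only [glwbState, if_pos rfl, if_neg (one_ne_zero), if_pos le_rfl]
        rw [Prod.le_def]
        constructor
        · simp only [← h20]
          simp only [mul_zero, sub_zero]
          rw [max_eq_left hx1]
          exact h1
        · apply max_le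
          · exact le_max_of_le_left (by nlinarith)
          · refine le_max_of_le_right ?_
            simp only [← h20, mul_zero, sub_zero]
            nlinarith
    · -- x.2 > 0 : take lam' = x.2 / x'.2
      have h2pos' : 0 < x'.2 := lt_of_lt_of_le h2pos h2
      have hne : x.2 / x'.2 ≠ 0 := by positivity
      have hle1 : x.2 / x'.2 ≤ 1 := (div_le_one h2pos').mpr h2
      have hkey : x.2 / x'.2 * δ * x'.2 = δ * x.2 := by field_simp
      refine ⟨x.2 / x'.2, ⟨by positivity, by linarith⟩, ?_, ?_⟩
      · simp only [glwbCashFlow, if_neg one_ne_zero, if_pos le_rfl, if_neg hne,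
          if_pos hle1, hkey, one_mul]
        exact le_rfl
      · simp only [glwbState, if_neg one_ne_zero, if_pos le_rfl, if_neg hne,
          if_pos hle1, hkey, one_mul]
        rw [Prod.le_def]
        constructor
        · exact max_le_max (by nlinarith) le_rfl
        · exact max_le_max h2 (by nlinarith)
  · -- lam = 2
    refine ⟨2, by constructor <;> norm_num, ?_, ?_⟩
    · simp only [glwbCashFlow]
      norm_num
      have key : δ * x.2 + (1 - κ) * max (x.1 - δ * x.2) 0 ≤
          δ * x'.2 + (1 - κ) * max (x'.1 - δ * x'.2) 0 := by
        rcases max_cases (x.1 - δ * x.2) 0 with ⟨e1, he1⟩ | ⟨e1, he1⟩ <;>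
          rcases max_cases (x'.1 - δ * x'.2) 0 with ⟨e2, he2⟩ | ⟨e2, he2⟩ <;>
          rw [e1, e2]
        · nlinarith [mul_nonneg (mul_nonneg hκ0 hδ0) (sub_nonneg.mpr h2),
            mul_nonneg (sub_nonneg.mpr hκ1) (sub_nonneg.mpr h1)]
        · nlinarith [mul_nonneg hκ0 he1]
        · nlinarith [mul_nonneg (sub_nonneg.mpr hκ1) he2,
            mul_nonneg hδ0 (sub_nonneg.mpr h2)]
        · nlinarith [mul_nonneg hδ0 (sub_nonneg.mpr h2)]
      nlinarith
    · simp only [glwbState]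
      norm_num
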